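/- For a weak totally associative ternary algebra (V,m), with δ¹f(x1,x2,x3) = m(f(x1),x2,x3) + m(x1,f(x2),x3) + m(x1,x2,f(x3)) − f(m(x1,x2,x3)) and δ²φ(x1,...,x5) = m(x1,x2,φ(x3,x4,x5)) − m(φ(x1,x2,x3),x4,x5) + φ(x1,x2,m(x3,x4,x5)) − φ(m(x1,x2,x3),x4,x5), one has δ² ∘ δ¹ = 0. -/
import Mathlib


/-- The 1-coboundary operator of a weak totally associative ternary algebra. -/
def wDelta1 {K V : Type*} [Field K] [AddCommGroup V] [Module K V]
    (m : V →ₗ[K] V →ₗ[K] V →ₗ[K] V) (f : V →ₗ[K] V) (x1 x2 x3 : V) : V :=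
  m (f x1) x2 x3 + m x1 (f x2) x3 + m x1 x2 (f x3) - f (m x1 x2 x3)

/-- The 2-coboundary operator of a weak totally associative ternary algebra. -/
def wDelta2 {K V : Type*} [Field K] [AddCommGroup V] [Module K V]
    (m : V →ₗ[K] V →ₗ[K] V →ₗ[K] V) (φ : V → V → V → V) (x1 x2 x3 x4 x5 : V) : V :=
  m x1 x2 (φ x3 x4 x5) - m (φ x1 x2 x3) x4 x5
    + φ x1 x2 (m x3 x4 x5) - φ (m x1 x2 x3) x4 x5

theorem stmt11 {K V : Type*} [Field K] [AddCommGroup V] [Module K V]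
    (m : V →ₗ[K] V →ₗ[K] V →ₗ[K] V)
    (hw : ∀ x1 x2 x3 x4 x5 : V, m (m x1 x2 x3) x4 x5 = m x1 x2 (m x3 x4 x5))
    (f : V →ₗ[K] V) :
    ∀ x1 x2 x3 x4 x5 : V, wDelta2 m (wDelta1 m f) x1 x2 x3 x4 x5 = 0 := by
  intro x1 x2 x3 x4 x5
  simp only [wDelta2, wDelta1, map_add, map_sub, LinearMap.add_apply, LinearMap.sub_apply]
  rw [hw x1 x2 (f x3) x4 x5, hw x1 x2 x3 (f x4) x5, hw x1 x2 x3 x4 (f x5),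
    hw (f x1) x2 x3 x4 x5, hw x1 (f x2) x3 x4 x5, hw x1 x2 x3 x4 x5]
  abel
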